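/- For every T > 0 there exists a constant C = C(T) > 0 such that for all x, y ∈ (0,π) and all t ∈ (0,T]: ∫₀ᵗ ∫₀^π |G_{t-r}(x,z) - G_{t-r}(y,z)|² dz dr ≤ C |x - y|², and ∫₀ᵗ ∫₀^π |ΔG_{t-r}(x,z) - ΔG_{t-r}(y,z)| dz dr ≤ C |x - y|. -/

import Mathlib

noncomputable section

open Real intervalIntegral

/-- The Dirichlet eigenfunctions `φ_j(x) = √(2/π) sin(jx)` on `(0,π)`. -/
def phiF (j : ℕ) (x : ℝ) : ℝ := Real.sqrt (2 / Real.pi) * Real.sin (j * x)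

/-- The Green function of `∂_t + Δ²` with Dirichlet boundary conditions on `(0,π)`:
`G_t(x,y) = Σ_{j≥1} e^{-j⁴ t} φ_j(x) φ_j(y)`. -/
def GF (t x y : ℝ) : ℝ :=
  ∑' j : ℕ, Real.exp (-((j : ℝ) + 1) ^ 4 * t) * phiF (j + 1) x * phiF (j + 1) y

/-- `ΔG_t(x,y) = -Σ_{j≥1} j² e^{-j⁴ t} φ_j(x) φ_j(y)`. -/
def DGF (t x y : ℝ) : ℝ :=
  -∑' j : ℕ, ((j : ℝ) + 1) ^ 2 * Real.exp (-((j : ℝ) + 1) ^ 4 * t) * phiF (j + 1) x * phiF (j + 1) y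

/-- The grid projection `κ_n(y) = h⌊y/h⌋` with `h = π/n`. -/
def kap (n : ℕ) (y : ℝ) : ℝ := (Real.pi / n) * ⌊y / (Real.pi / n)⌋

/-- The eigenvalue `λ_{j,n} = -(4n²/π²) sin²(jπ/(2n))` of the discrete Dirichlet Laplacian. -/
def lamEig (j n : ℕ) : ℝ :=
  -(4 * (n : ℝ) ^ 2 / Real.pi ^ 2) * Real.sin ((j : ℝ) * Real.pi / (2 * n)) ^ 2

/-- The piecewise-linear interpolant `φ_{j,n}` of `φ_j` on the grid `{0, h, …, π}`. -/
def phiIn (n j : ℕ) (x : ℝ) : ℝ :=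
  phiF j (kap n x)
    + ((n : ℝ) / Real.pi) * (x - kap n x) * (phiF j (kap n x + Real.pi / n) - phiF j (kap n x))

/-- The spatially discrete Green function
`G^n_t(x,y) = Σ_{j=1}^{n-1} e^{-λ_{j,n}² t} φ_{j,n}(x) φ_j(κ_n(y))`. -/
def Gn (n : ℕ) (t x y : ℝ) : ℝ :=
  ∑ j ∈ Finset.range (n - 1),
    Real.exp (-(lamEig (j + 1) n) ^ 2 * t) * phiIn n (j + 1) x * phiF (j + 1) (kap n y)

/-- `Δ_nG^n_t(x,y) = Σ_{j=1}^{n-1} λ_{j,n} e^{-λ_{j,n}² t} φ_{j,n}(x) φ_j(κ_n(y))`. -/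
def DGn (n : ℕ) (t x y : ℝ) : ℝ :=
  ∑ j ∈ Finset.range (n - 1),
    lamEig (j + 1) n * Real.exp (-(lamEig (j + 1) n) ^ 2 * t)
      * phiIn n (j + 1) x * phiF (j + 1) (kap n y)

/-- The fully discrete Green function
`G^{n,τ}_t(x,y) = Σ_{j=1}^{n-1} (1 + τλ_{j,n}²)^{-⌊t/τ⌋} φ_{j,n}(x) φ_j(κ_n(y))`. -/
def Gnt (n : ℕ) (τ t x y : ℝ) : ℝ :=
  ∑ j ∈ Finset.range (n - 1),
    ((1 + τ * (lamEig (j + 1) n) ^ 2) ^ (⌊t / τ⌋₊))⁻¹ * phiIn n (j + 1) x * phiF (j + 1) (kap n y)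

/-- `Δ_nG^{n,τ}_t(x,y) = Σ_{j=1}^{n-1} λ_{j,n} (1 + τλ_{j,n}²)^{-⌊t/τ⌋} φ_{j,n}(x) φ_j(κ_n(y))`. -/
def DGnt (n : ℕ) (τ t x y : ℝ) : ℝ :=
  ∑ j ∈ Finset.range (n - 1),
    lamEig (j + 1) n * ((1 + τ * (lamEig (j + 1) n) ^ 2) ^ (⌊t / τ⌋₊))⁻¹
      * phiIn n (j + 1) x * phiF (j + 1) (kap n y)


open MeasureTheory

lemma phiF_cont (j : ℕ) : Continuous (phiF j) :=
  continuous_const.mul (Real.continuous_sin.comp (continuous_const.mul continuous_id))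

lemma sqrt_two_div_pi_le_one : Real.sqrt (2 / Real.pi) ≤ 1 := by
  rw [Real.sqrt_le_one]
  rw [div_le_one Real.pi_pos]
  nlinarith [Real.pi_gt_three]

lemma phiF_abs_le (j : ℕ) (x : ℝ) : |phiF j x| ≤ 1 := by
  unfold phiF
  rw [abs_mul, abs_of_nonneg (Real.sqrt_nonneg _)]
  calc Real.sqrt (2/Real.pi) * |Real.sin (j*x)| ≤ 1 * 1 :=
    mul_le_mul sqrt_two_div_pi_le_one (Real.abs_sin_le_one _) (abs_nonneg _) zero_le_one
  _ = 1 := one_mul 1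

lemma phiF_lip (j : ℕ) (x y : ℝ) : |phiF j x - phiF j y| ≤ j * |x - y| := by
  unfold phiF
  rw [← mul_sub, abs_mul, abs_of_nonneg (Real.sqrt_nonneg _)]
  have h1 : |Real.sin (j*x) - Real.sin (j*y)| ≤ (j:ℝ) * |x - y| := by
    rw [Real.sin_sub_sin]
    have h2 : |Real.sin (((j:ℝ)*x - j*y)/2)| ≤ |((j:ℝ)*x - j*y)/2| := Real.abs_sin_le_abs
    have h3 : |Real.cos (((j:ℝ)*x + j*y)/2)| ≤ 1 := Real.abs_cos_le_one _
    rw [abs_mul, abs_mul]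
    have : |((j:ℝ)*x - j*y)/2| = (j:ℝ) * |x-y| / 2 := by
      rw [abs_div, abs_of_pos (by norm_num : (0:ℝ) < 2), ← mul_sub, abs_mul, abs_of_nonneg (Nat.cast_nonneg j)]
    rw [this] at h2
    have h4 : |(2:ℝ)| = 2 := by norm_num
    rw [h4]
    nlinarith [abs_nonneg (Real.sin (((j:ℝ)*x - j*y)/2)), abs_nonneg (Real.cos (((j:ℝ)*x + j*y)/2))]
  calc Real.sqrt (2/Real.pi) * |Real.sin (j*x) - Real.sin (j*y)| ≤ 1 * ((j:ℝ)*|x-y|) :=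
    mul_le_mul sqrt_two_div_pi_le_one h1 (abs_nonneg _) zero_le_one
  _ = j * |x-y| := one_mul _


lemma integral_cos_int (c : ℤ) :
    ∫ z in (0:ℝ)..Real.pi, Real.cos ((c:ℝ) * z) = if c = 0 then Real.pi else 0 := by
  by_cases hc : c = 0
  · simp [hc]
  · have hc' : (c:ℝ) ≠ 0 := Int.cast_ne_zero.mpr hc
    rw [if_neg hc]
    have := intervalIntegral.integral_comp_mul_left (fun x => Real.cos x) hc' (a := 0) (b := Real.pi)
    rw [this]
    simp [Real.sin_int_mul_pi]

lemma phi_orth (j k : ℕ) :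
    ∫ z in (0:ℝ)..Real.pi, phiF (j+1) z * phiF (k+1) z = if j = k then 1 else 0 := by
  set c₁ : ℤ := (j:ℤ) - k with hc₁
  set c₂ : ℤ := (j:ℤ) + k + 2 with hc₂
  have key : ∀ z : ℝ, phiF (j+1) z * phiF (k+1) z =
      (1/Real.pi) * (Real.cos ((c₁:ℝ) * z) - Real.cos ((c₂:ℝ) * z)) := by
    intro z
    unfold phiF
    have hs : Real.sqrt (2/Real.pi) * Real.sqrt (2/Real.pi) = 2/Real.pi :=
      Real.mul_self_sqrt (by positivity)
    have h2 := Real.two_mul_sin_mul_sin ((↑(j+1):ℝ) * z) ((↑(k+1):ℝ) * z)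
    have e1 : (↑(j+1):ℝ) * z - (↑(k+1):ℝ) * z = (c₁:ℝ) * z := by
      rw [hc₁]; push_cast; ring
    have e2 : (↑(j+1):ℝ) * z + (↑(k+1):ℝ) * z = (c₂:ℝ) * z := by
      rw [hc₂]; push_cast; ring
    rw [e1, e2] at h2
    have e3 : Real.sqrt (2/Real.pi) * Real.sin ((↑(j+1):ℝ) * z) * (Real.sqrt (2/Real.pi) * Real.sin ((↑(k+1):ℝ) * z))
        = (2/Real.pi) * (Real.sin ((↑(j+1):ℝ) * z) * Real.sin ((↑(k+1):ℝ) * z)) := by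
      linear_combination (Real.sin ((↑(j+1):ℝ) * z) * Real.sin ((↑(k+1):ℝ) * z)) * hs
    rw [e3]
    linear_combination (1/Real.pi) * h2
  rw [intervalIntegral.integral_congr (g := fun z => (1/Real.pi) * (Real.cos ((c₁:ℝ) * z) - Real.cos ((c₂:ℝ) * z))) (fun z _ => key z)]
  rw [intervalIntegral.integral_const_mul]
  rw [intervalIntegral.integral_sub
    (Continuous.intervalIntegrable (by continuity) _ _)
    (Continuous.intervalIntegrable (by continuity) _ _)]
  rw [integral_cos_int, integral_cos_int]
  have h2 : c₂ ≠ 0 := by omega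
  rw [if_neg h2]
  by_cases h : j = k
  · have : c₁ = 0 := by omega
    rw [if_pos this, if_pos h]
    field_simp
    simp
  · have : c₁ ≠ 0 := by omega
    rw [if_neg this, if_neg h]
    simp


lemma vol_Ioc_pi : (volume (Set.Ioc (0:ℝ) Real.pi)).toReal = Real.pi := by
  rw [Real.volume_Ioc, sub_zero, ENNReal.toReal_ofReal Real.pi_pos.le]

lemma parseval (c : ℕ → ℝ) (hc : Summable fun j => |c j|) :
    ∫ z in (0:ℝ)..Real.pi, (∑' j, c j * phiF (j+1) z)^2 = ∑' j, (c j)^2 := by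
  set A := ∑' j, |c j| with hA
  set f : ℝ → ℝ := fun z => ∑' j, c j * phiF (j+1) z with hf
  have hterm_abs : ∀ j z, |c j * phiF (j+1) z| ≤ |c j| := fun j z => by
    rw [abs_mul]; exact mul_le_of_le_one_right (abs_nonneg _) (phiF_abs_le _ _)
  have hfc : Continuous f := by
    apply continuous_tsum (fun j => continuous_const.mul (phiF_cont (j+1))) hc
    intro j z; rw [Real.norm_eq_abs]; exact hterm_abs j z
  have hfA : ∀ z, |f z| ≤ A := by
    intro z
    have h1 : Summable fun j => |c j * phiF (j+1) z| :=
      Summable.of_nonneg_of_le (fun j => abs_nonneg _) (fun j => hterm_abs j z) hc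
    calc |f z| ≤ ∑' j, |c j * phiF (j+1) z| := by
          simpa only [Real.norm_eq_abs] using
            norm_tsum_le_tsum_norm (f := fun j => c j * phiF (j+1) z)
              (by simpa only [Real.norm_eq_abs] using h1)
      _ ≤ A := Summable.tsum_le_tsum (fun j => hterm_abs j z) h1 hc
  have hA0 : 0 ≤ A := tsum_nonneg fun j => abs_nonneg _
  -- step A
  have stepA : ∀ k, ∫ z in Set.Ioc (0:ℝ) Real.pi, phiF (k+1) z * f z = c k := by
    intro k
    have hrepr : ∀ z, phiF (k+1) z * f z = ∑' m, (c m * (phiF (k+1) z * phiF (m+1) z)) := by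
      intro z
      rw [hf]
      calc phiF (k+1) z * ∑' j, c j * phiF (j+1) z
          = ∑' m, phiF (k+1) z * (c m * phiF (m+1) z) := (tsum_mul_left).symm
        _ = ∑' m, (c m * (phiF (k+1) z * phiF (m+1) z)) := tsum_congr fun m => by ring
    simp only [hrepr]
    have hF_int : ∀ m, Integrable (fun z => c m * (phiF (k+1) z * phiF (m+1) z))
        (volume.restrict (Set.Ioc (0:ℝ) Real.pi)) :=
      fun m => (Continuous.integrableOn_Ioc (by
        exact continuous_const.mul ((phiF_cont (k+1)).mul (phiF_cont (m+1)))))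
    have hbnd : ∀ m, (∫ z in Set.Ioc (0:ℝ) Real.pi, ‖c m * (phiF (k+1) z * phiF (m+1) z)‖)
        ≤ Real.pi * |c m| := by
      intro m
      have h1 : ∀ z, ‖c m * (phiF (k+1) z * phiF (m+1) z)‖ ≤ |c m| := by
        intro z
        rw [Real.norm_eq_abs, abs_mul, abs_mul]
        calc |c m| * (|phiF (k+1) z| * |phiF (m+1) z|) ≤ |c m| * (1 * 1) := by
              apply mul_le_mul_of_nonneg_left _ (abs_nonneg _)
              exact mul_le_mul (phiF_abs_le _ _) (phiF_abs_le _ _) (abs_nonneg _) zero_le_one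
          _ = |c m| := by ring
      calc (∫ z in Set.Ioc (0:ℝ) Real.pi, ‖c m * (phiF (k+1) z * phiF (m+1) z)‖)
          ≤ ∫ _ in Set.Ioc (0:ℝ) Real.pi, |c m| := by
            apply integral_mono_of_nonneg (Filter.Eventually.of_forall fun z => norm_nonneg _)
              (integrable_const _) (Filter.Eventually.of_forall h1)
        _ = Real.pi * |c m| := by rw [setIntegral_const, measureReal_def, vol_Ioc_pi, smul_eq_mul]
    have hF_sum : Summable fun m =>
        ∫ z in Set.Ioc (0:ℝ) Real.pi, ‖c m * (phiF (k+1) z * phiF (m+1) z)‖ :=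
      Summable.of_nonneg_of_le (fun m => integral_nonneg fun z => norm_nonneg _) hbnd
        (hc.mul_left Real.pi)
    rw [← MeasureTheory.integral_tsum_of_summable_integral_norm hF_int hF_sum]
    have heach : ∀ m, ∫ z in Set.Ioc (0:ℝ) Real.pi, c m * (phiF (k+1) z * phiF (m+1) z)
        = if m = k then c k else 0 := by
      intro m
      rw [MeasureTheory.integral_const_mul, ← intervalIntegral.integral_of_le Real.pi_pos.le,
        phi_orth]
      by_cases h : k = m
      · subst h; simp
      · rw [if_neg h, if_neg (Ne.symm h), mul_zero]
    rw [tsum_congr heach, tsum_ite_eq]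
  -- step B
  have hrepr2 : ∀ z, f z ^ 2 = ∑' k, (c k * (phiF (k+1) z * f z)) := by
    intro z
    have hfz : f z = ∑' j, c j * phiF (j+1) z := rfl
    rw [sq]
    nth_rewrite 2 [hfz]
    rw [← tsum_mul_left]
    exact tsum_congr fun k => by ring
  rw [intervalIntegral.integral_of_le Real.pi_pos.le]
  show ∫ z in Set.Ioc (0:ℝ) Real.pi, f z ^ 2 = _
  simp only [hrepr2]
  have hG_int : ∀ k, Integrable (fun z => c k * (phiF (k+1) z * f z))
      (volume.restrict (Set.Ioc (0:ℝ) Real.pi)) :=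
    fun k => (Continuous.integrableOn_Ioc (continuous_const.mul ((phiF_cont (k+1)).mul hfc)))
  have hbnd2 : ∀ k, (∫ z in Set.Ioc (0:ℝ) Real.pi, ‖c k * (phiF (k+1) z * f z)‖)
      ≤ (Real.pi * A) * |c k| := by
    intro k
    have h1 : ∀ z, ‖c k * (phiF (k+1) z * f z)‖ ≤ |c k| * A := by
      intro z
      rw [Real.norm_eq_abs, abs_mul, abs_mul]
      apply mul_le_mul_of_nonneg_left _ (abs_nonneg _)
      calc |phiF (k+1) z| * |f z| ≤ 1 * A :=
            mul_le_mul (phiF_abs_le _ _) (hfA z) (abs_nonneg _) zero_le_one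
        _ = A := one_mul A
    calc (∫ z in Set.Ioc (0:ℝ) Real.pi, ‖c k * (phiF (k+1) z * f z)‖)
        ≤ ∫ _ in Set.Ioc (0:ℝ) Real.pi, |c k| * A := by
          apply integral_mono_of_nonneg (Filter.Eventually.of_forall fun z => norm_nonneg _)
            (integrable_const _) (Filter.Eventually.of_forall h1)
      _ = (Real.pi * A) * |c k| := by rw [setIntegral_const, measureReal_def, vol_Ioc_pi, smul_eq_mul]; ring
  have hG_sum : Summable fun k =>
      ∫ z in Set.Ioc (0:ℝ) Real.pi, ‖c k * (phiF (k+1) z * f z)‖ :=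
    Summable.of_nonneg_of_le (fun k => integral_nonneg fun z => norm_nonneg _) hbnd2
      (hc.mul_left (Real.pi * A))
  rw [← MeasureTheory.integral_tsum_of_summable_integral_norm hG_int hG_sum]
  apply tsum_congr
  intro k
  rw [MeasureTheory.integral_const_mul, stepA k, sq]


lemma summable_aux (k : ℕ) {s : ℝ} (hs : 0 < s) :
    Summable fun j : ℕ => ((j:ℝ)+1)^k * Real.exp (-((j:ℝ)+1)^4 * s) := by
  have hr : ‖Real.exp (-s)‖ < 1 := by
    rw [Real.norm_eq_abs, abs_of_pos (Real.exp_pos _)]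
    exact Real.exp_lt_one_iff.mpr (by linarith)
  have h0 := summable_pow_mul_geometric_of_norm_lt_one (R := ℝ) k hr
  have h1 : Summable fun j : ℕ => ((j:ℝ)+1)^k * Real.exp (-s) ^ (j+1) := by
    have := (summable_nat_add_iff (f := fun n : ℕ => (n : ℝ)^k * Real.exp (-s) ^ n) 1).mpr h0
    refine this.congr fun j => ?_
    push_cast
    ring
  refine Summable.of_nonneg_of_le (fun j => by positivity) (fun j => ?_) h1
  have hj : (0:ℝ) ≤ (j:ℝ) := Nat.cast_nonneg j
  have hm : (1:ℝ) ≤ (j:ℝ)+1 := by linarith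
  have hexp : Real.exp (-((j:ℝ)+1)^4 * s) ≤ Real.exp (-s) ^ (j+1) := by
    have he : Real.exp (-s) ^ (j+1) = Real.exp (((j:ℕ)+1 : ℕ) * (-s)) := by
      rw [Real.exp_nat_mul]
    rw [he]
    apply Real.exp_le_exp.mpr
    push_cast
    have hm4 : (↑j+1:ℝ) ≤ ((j:ℝ)+1)^4 := by
      calc (↑j+1:ℝ) = ((j:ℝ)+1)^1 := (pow_one _).symm
      _ ≤ ((j:ℝ)+1)^4 := pow_le_pow_right₀ hm (by norm_num)
    nlinarith [mul_le_mul_of_nonneg_right hm4 hs.le]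
  exact mul_le_mul_of_nonneg_left hexp (by positivity)

lemma exp_neg_le (u : ℝ) (hu : 0 < u) : Real.exp (-u) ≤ 4 / u^2 := by
  have h := Real.add_one_le_exp (u/2)
  have h2 : (1 + u/2)^2 ≤ Real.exp u := by
    have : (Real.exp (u/2))^2 = Real.exp u := by
      rw [← Real.exp_nat_mul]
      congr 1
      push_cast
      ring
    nlinarith [h, hu]
  rw [Real.exp_neg]
  rw [inv_eq_one_div, div_le_div_iff₀ (Real.exp_pos u) (by positivity)]
  nlinarith [h2, hu]

lemma exp_neg_rpow (u θ : ℝ) (hu : 0 < u) (hθ0 : 0 ≤ θ) (hθ1 : θ ≤ 1) :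
    Real.exp (-u) ≤ (4 / u^2) ^ θ := by
  have h1 : Real.exp (-u) = (Real.exp (-u)) ^ θ * (Real.exp (-u)) ^ (1-θ) := by
    rw [← Real.rpow_add (Real.exp_pos _)]
    norm_num
  rw [h1]
  have h2 : (Real.exp (-u)) ^ θ ≤ (4/u^2) ^ θ :=
    Real.rpow_le_rpow (Real.exp_pos _).le (exp_neg_le u hu) hθ0
  have h3 : (Real.exp (-u)) ^ (1-θ) ≤ 1 :=
    Real.rpow_le_one (Real.exp_pos _).le (Real.exp_le_one_iff.mpr (by linarith)) (by linarith)
  calc (Real.exp (-u)) ^ θ * (Real.exp (-u)) ^ (1-θ) ≤ (4/u^2) ^ θ * 1 :=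
        mul_le_mul h2 h3 (Real.rpow_nonneg (Real.exp_pos _).le _) (Real.rpow_nonneg (by positivity) _)
    _ = (4/u^2) ^ θ := mul_one _

lemma exp_sq_bound (j : ℕ) {s : ℝ} (hs : 0 < s) {θ : ℝ} (hθ0 : 0 ≤ θ) (hθ1 : θ ≤ 1) :
    Real.exp (-((j:ℝ)+1)^4 * s) ^ 2 ≤ ((j:ℝ)+1) ^ (-(8*θ)) * s ^ (-(2*θ)) := by
  set m : ℝ := (j:ℝ)+1 with hmdef
  have hm : (1:ℝ) ≤ m := by
    have : (0:ℝ) ≤ (j:ℝ) := Nat.cast_nonneg j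
    rw [hmdef]; linarith
  have hm0 : (0:ℝ) < m := by linarith
  have hu : (0:ℝ) < 2 * m^4 * s := by positivity
  have he : Real.exp (-m^4 * s) ^ 2 = Real.exp (-(2 * m^4 * s)) := by
    rw [← Real.exp_nat_mul]
    ring_nf
  rw [he]
  have hb := exp_neg_rpow (2*m^4*s) θ hu hθ0 hθ1
  have heq : (4 / (2*m^4*s)^2) ^ θ = m ^ (-(8*θ)) * s ^ (-(2*θ)) := by
    have h4 : 4 / (2*m^4*s)^2 = (m^(8:ℕ))⁻¹ * (s^(2:ℕ))⁻¹ := by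
      field_simp
      ring
    rw [h4, Real.mul_rpow (by positivity) (by positivity),
      ← Real.rpow_natCast m 8, ← Real.rpow_natCast s 2,
      ← Real.rpow_neg_one (m ^ ((8:ℕ):ℝ)), ← Real.rpow_neg_one (s ^ ((2:ℕ):ℝ)),
      ← Real.rpow_mul hm0.le, ← Real.rpow_mul hs.le,
      ← Real.rpow_mul hm0.le, ← Real.rpow_mul hs.le]
    norm_num
  rw [← heq]
  exact hb


/-- the constant `K = Σ (j+1)^{-3/2}` -/
def Kc : ℝ := ∑' j : ℕ, ((j:ℝ)+1) ^ (-(3:ℝ)/2)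

lemma K_summable : Summable (fun j : ℕ => ((j:ℝ)+1) ^ (-(3:ℝ)/2)) := by
  have h0 : Summable (fun n : ℕ => (n:ℝ) ^ (-(3:ℝ)/2)) :=
    Real.summable_nat_rpow.mpr (by norm_num)
  have := (summable_nat_add_iff (f := fun n : ℕ => (n:ℝ) ^ (-(3:ℝ)/2)) 1).mpr h0
  refine this.congr fun j => ?_
  push_cast
  ring_nf

lemma K_pos : 0 < Kc := by
  have h0 : (0:ℝ) < ((0:ℕ):ℝ) + 1 := by norm_num
  refine Summable.tsum_pos K_summable (fun j => Real.rpow_nonneg (by positivity) _) 0 ?_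
  positivity

lemma K_nonneg : 0 ≤ Kc := K_pos.le

/-- coefficients -/
def bcoef (x y s : ℝ) (j : ℕ) : ℝ :=
  Real.exp (-((j:ℝ)+1)^4 * s) * (phiF (j+1) x - phiF (j+1) y)

def acoef (x y s : ℝ) (j : ℕ) : ℝ :=
  ((j:ℝ)+1)^2 * Real.exp (-((j:ℝ)+1)^4 * s) * (phiF (j+1) x - phiF (j+1) y)

lemma bcoef_abs_summable (x y : ℝ) {s : ℝ} (hs : 0 < s) :
    Summable fun j => |bcoef x y s j| := by
  refine Summable.of_nonneg_of_le (fun j => abs_nonneg _) (fun j => ?_)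
    ((summable_aux 0 hs).mul_left 2)
  unfold bcoef
  rw [abs_mul, abs_of_pos (Real.exp_pos _)]
  have h1 : |phiF (j+1) x - phiF (j+1) y| ≤ 2 := by
    calc |phiF (j+1) x - phiF (j+1) y| ≤ |phiF (j+1) x| + |phiF (j+1) y| := abs_sub _ _
      _ ≤ 2 := by linarith [phiF_abs_le (j+1) x, phiF_abs_le (j+1) y]
  calc Real.exp (-((j:ℝ)+1)^4 * s) * |phiF (j+1) x - phiF (j+1) y|
      ≤ Real.exp (-((j:ℝ)+1)^4 * s) * 2 := by
        exact mul_le_mul_of_nonneg_left h1 (Real.exp_pos _).le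
    _ = 2 * (((j:ℝ)+1)^0 * Real.exp (-((j:ℝ)+1)^4 * s)) := by ring

lemma acoef_abs_summable (x y : ℝ) {s : ℝ} (hs : 0 < s) :
    Summable fun j => |acoef x y s j| := by
  refine Summable.of_nonneg_of_le (fun j => abs_nonneg _) (fun j => ?_)
    ((summable_aux 2 hs).mul_left 2)
  unfold acoef
  rw [abs_mul, abs_mul, abs_of_pos (Real.exp_pos _), abs_of_pos (by positivity : (0:ℝ) < ((j:ℝ)+1)^2)]
  have h1 : |phiF (j+1) x - phiF (j+1) y| ≤ 2 := by
    calc |phiF (j+1) x - phiF (j+1) y| ≤ |phiF (j+1) x| + |phiF (j+1) y| := abs_sub _ _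
      _ ≤ 2 := by linarith [phiF_abs_le (j+1) x, phiF_abs_le (j+1) y]
  calc ((j:ℝ)+1)^2 * Real.exp (-((j:ℝ)+1)^4 * s) * |phiF (j+1) x - phiF (j+1) y|
      ≤ ((j:ℝ)+1)^2 * Real.exp (-((j:ℝ)+1)^4 * s) * 2 := by
        exact mul_le_mul_of_nonneg_left h1 (by positivity)
    _ = 2 * (((j:ℝ)+1)^2 * Real.exp (-((j:ℝ)+1)^4 * s)) := by ring

lemma phi_diff_sq (j : ℕ) (x y : ℝ) :
    (phiF (j+1) x - phiF (j+1) y)^2 ≤ ((j:ℝ)+1)^2 * (x-y)^2 := by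
  have h := phiF_lip (j+1) x y
  have h0 : (0:ℝ) ≤ |phiF (j+1) x - phiF (j+1) y| := abs_nonneg _
  have h2 : (phiF (j+1) x - phiF (j+1) y)^2 = |phiF (j+1) x - phiF (j+1) y|^2 := (sq_abs _).symm
  have h3 : ((↑(j+1):ℝ) * |x - y|)^2 = ((j:ℝ)+1)^2 * (x-y)^2 := by
    rw [mul_pow, sq_abs]
    push_cast
    ring
  rw [h2, ← h3]
  exact pow_le_pow_left₀ h0 h 2

lemma bcoef_sq_bound (x y : ℝ) (j : ℕ) {s : ℝ} (hs : 0 < s) :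
    (bcoef x y s j)^2 ≤ (x-y)^2 * s ^ (-(7:ℝ)/8) * ((j:ℝ)+1) ^ (-(3:ℝ)/2) := by
  have hm0 : (0:ℝ) < (j:ℝ)+1 := by positivity
  have hexp := exp_sq_bound j hs (θ := 7/16) (by norm_num) (by norm_num)
  have hphi := phi_diff_sq j x y
  unfold bcoef
  rw [mul_pow]
  have hstep : Real.exp (-((j:ℝ)+1)^4 * s) ^ 2 * (phiF (j+1) x - phiF (j+1) y)^2
      ≤ (((j:ℝ)+1) ^ (-(8*(7/16):ℝ)) * s ^ (-(2*(7/16):ℝ))) * (((j:ℝ)+1)^2 * (x-y)^2) :=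
    mul_le_mul hexp hphi (sq_nonneg _) (by positivity)
  refine hstep.trans (le_of_eq ?_)
  have hc : ((j:ℝ)+1) ^ (-(8*(7/16):ℝ)) * ((j:ℝ)+1)^2 = ((j:ℝ)+1) ^ (-(3:ℝ)/2) := by
    rw [← Real.rpow_natCast ((j:ℝ)+1) 2, ← Real.rpow_add hm0]
    norm_num
  calc (((j:ℝ)+1) ^ (-(8*(7/16):ℝ)) * s ^ (-(2*(7/16):ℝ))) * (((j:ℝ)+1)^2 * (x-y)^2)
      = (((j:ℝ)+1) ^ (-(8*(7/16):ℝ)) * ((j:ℝ)+1)^2) * s ^ (-(2*(7/16):ℝ)) * (x-y)^2 := by ring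
    _ = ((j:ℝ)+1) ^ (-(3:ℝ)/2) * s ^ (-(2*(7/16):ℝ)) * (x-y)^2 := by rw [hc]
    _ = (x-y)^2 * s ^ (-(7:ℝ)/8) * ((j:ℝ)+1) ^ (-(3:ℝ)/2) := by norm_num; ring

lemma acoef_sq_bound (x y : ℝ) (j : ℕ) {s : ℝ} (hs : 0 < s) :
    (acoef x y s j)^2 ≤ (x-y)^2 * s ^ (-(15:ℝ)/8) * ((j:ℝ)+1) ^ (-(3:ℝ)/2) := by
  have hm0 : (0:ℝ) < (j:ℝ)+1 := by positivity
  have hexp := exp_sq_bound j hs (θ := 15/16) (by norm_num) (by norm_num)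
  have hphi := phi_diff_sq j x y
  unfold acoef
  rw [mul_pow, mul_pow]
  have hstep : Real.exp (-((j:ℝ)+1)^4 * s) ^ 2 * (phiF (j+1) x - phiF (j+1) y)^2
      ≤ (((j:ℝ)+1) ^ (-(8*(15/16):ℝ)) * s ^ (-(2*(15/16):ℝ))) * (((j:ℝ)+1)^2 * (x-y)^2) :=
    mul_le_mul hexp hphi (sq_nonneg _) (by positivity)
  have hstep2 : (((j:ℝ)+1)^2)^2 * (Real.exp (-((j:ℝ)+1)^4 * s) ^ 2 * (phiF (j+1) x - phiF (j+1) y)^2)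
      ≤ (((j:ℝ)+1)^2)^2 * ((((j:ℝ)+1) ^ (-(8*(15/16):ℝ)) * s ^ (-(2*(15/16):ℝ))) * (((j:ℝ)+1)^2 * (x-y)^2)) :=
    mul_le_mul_of_nonneg_left hstep (by positivity)
  have hre : (((j:ℝ)+1)^2)^2 * Real.exp (-((j:ℝ)+1)^4 * s) ^ 2 * (phiF (j+1) x - phiF (j+1) y)^2
      = (((j:ℝ)+1)^2)^2 * (Real.exp (-((j:ℝ)+1)^4 * s) ^ 2 * (phiF (j+1) x - phiF (j+1) y)^2) := by ring
  rw [hre]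
  refine hstep2.trans (le_of_eq ?_)
  have hc : (((j:ℝ)+1)^2)^2 * (((j:ℝ)+1) ^ (-(8*(15/16):ℝ)) * ((j:ℝ)+1)^2) = ((j:ℝ)+1) ^ (-(3:ℝ)/2) := by
    rw [← Real.rpow_natCast ((j:ℝ)+1) 2, ← Real.rpow_natCast (((j:ℝ)+1) ^ ((2:ℕ):ℝ)) 2,
      ← Real.rpow_mul hm0.le, ← Real.rpow_add hm0, ← Real.rpow_add hm0]
    norm_num
  calc (((j:ℝ)+1)^2)^2 * ((((j:ℝ)+1) ^ (-(8*(15/16):ℝ)) * s ^ (-(2*(15/16):ℝ))) * (((j:ℝ)+1)^2 * (x-y)^2))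
      = ((((j:ℝ)+1)^2)^2 * (((j:ℝ)+1) ^ (-(8*(15/16):ℝ)) * ((j:ℝ)+1)^2)) * s ^ (-(2*(15/16):ℝ)) * (x-y)^2 := by ring
    _ = ((j:ℝ)+1) ^ (-(3:ℝ)/2) * s ^ (-(2*(15/16):ℝ)) * (x-y)^2 := by rw [hc]
    _ = (x-y)^2 * s ^ (-(15:ℝ)/8) * ((j:ℝ)+1) ^ (-(3:ℝ)/2) := by norm_num; ring

lemma bcoef_tsum_bound (x y : ℝ) {s : ℝ} (hs : 0 < s) :
    ∑' j, (bcoef x y s j)^2 ≤ (x-y)^2 * s ^ (-(7:ℝ)/8) * Kc := by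
  have hRs : Summable fun j : ℕ => ((x-y)^2 * s ^ (-(7:ℝ)/8)) * ((j:ℝ)+1) ^ (-(3:ℝ)/2) :=
    K_summable.mul_left _
  have hle : ∀ j : ℕ, (bcoef x y s j)^2
      ≤ ((x-y)^2 * s ^ (-(7:ℝ)/8)) * ((j:ℝ)+1) ^ (-(3:ℝ)/2) :=
    fun j => (bcoef_sq_bound x y j hs).trans (le_of_eq (by ring))
  have hb2 : Summable fun j => (bcoef x y s j)^2 :=
    Summable.of_nonneg_of_le (fun j => sq_nonneg _) hle hRs
  calc ∑' j, (bcoef x y s j)^2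
      ≤ ∑' j : ℕ, ((x-y)^2 * s ^ (-(7:ℝ)/8)) * ((j:ℝ)+1) ^ (-(3:ℝ)/2) :=
      Summable.tsum_le_tsum hle hb2 hRs
    _ = (x-y)^2 * s ^ (-(7:ℝ)/8) * Kc := by rw [tsum_mul_left]; rfl

lemma acoef_tsum_bound (x y : ℝ) {s : ℝ} (hs : 0 < s) :
    ∑' j, (acoef x y s j)^2 ≤ (x-y)^2 * s ^ (-(15:ℝ)/8) * Kc := by
  have hRs : Summable fun j : ℕ => ((x-y)^2 * s ^ (-(15:ℝ)/8)) * ((j:ℝ)+1) ^ (-(3:ℝ)/2) :=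
    K_summable.mul_left _
  have hle : ∀ j : ℕ, (acoef x y s j)^2
      ≤ ((x-y)^2 * s ^ (-(15:ℝ)/8)) * ((j:ℝ)+1) ^ (-(3:ℝ)/2) :=
    fun j => (acoef_sq_bound x y j hs).trans (le_of_eq (by ring))
  have ha2 : Summable fun j => (acoef x y s j)^2 :=
    Summable.of_nonneg_of_le (fun j => sq_nonneg _) hle hRs
  calc ∑' j, (acoef x y s j)^2
      ≤ ∑' j : ℕ, ((x-y)^2 * s ^ (-(15:ℝ)/8)) * ((j:ℝ)+1) ^ (-(3:ℝ)/2) :=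
      Summable.tsum_le_tsum hle ha2 hRs
    _ = (x-y)^2 * s ^ (-(15:ℝ)/8) * Kc := by rw [tsum_mul_left]; rfl

lemma GF_term_summable (x z : ℝ) {s : ℝ} (hs : 0 < s) :
    Summable fun j : ℕ => Real.exp (-((j:ℝ)+1)^4 * s) * phiF (j+1) x * phiF (j+1) z := by
  apply Summable.of_norm
  refine Summable.of_nonneg_of_le (fun j => norm_nonneg _) (fun j => ?_)
    ((summable_aux 0 hs).congr fun j => by rw [pow_zero, one_mul])
  rw [Real.norm_eq_abs, abs_mul, abs_mul, abs_of_pos (Real.exp_pos _)]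
  calc Real.exp (-((j:ℝ)+1)^4 * s) * |phiF (j+1) x| * |phiF (j+1) z|
      ≤ Real.exp (-((j:ℝ)+1)^4 * s) * 1 * 1 := by
        apply mul_le_mul _ (phiF_abs_le _ _) (abs_nonneg _) (by positivity)
        exact mul_le_mul_of_nonneg_left (phiF_abs_le _ _) (Real.exp_pos _).le
    _ = Real.exp (-((j:ℝ)+1)^4 * s) := by ring

lemma DGF_term_summable (x z : ℝ) {s : ℝ} (hs : 0 < s) :
    Summable fun j : ℕ =>
      ((j:ℝ)+1)^2 * Real.exp (-((j:ℝ)+1)^4 * s) * phiF (j+1) x * phiF (j+1) z := by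
  apply Summable.of_norm
  refine Summable.of_nonneg_of_le (fun j => norm_nonneg _) (fun j => ?_) (summable_aux 2 hs)
  rw [Real.norm_eq_abs, abs_mul, abs_mul, abs_mul, abs_of_pos (Real.exp_pos _),
    abs_of_pos (by positivity : (0:ℝ) < ((j:ℝ)+1)^2)]
  calc ((j:ℝ)+1)^2 * Real.exp (-((j:ℝ)+1)^4 * s) * |phiF (j+1) x| * |phiF (j+1) z|
      ≤ ((j:ℝ)+1)^2 * Real.exp (-((j:ℝ)+1)^4 * s) * 1 * 1 := by
        apply mul_le_mul _ (phiF_abs_le _ _) (abs_nonneg _) (by positivity)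
        exact mul_le_mul_of_nonneg_left (phiF_abs_le _ _) (by positivity)
    _ = ((j:ℝ)+1)^2 * Real.exp (-((j:ℝ)+1)^4 * s) := by ring

lemma GF_sub (x y z : ℝ) {s : ℝ} (hs : 0 < s) :
    GF s x z - GF s y z = ∑' j, bcoef x y s j * phiF (j+1) z := by
  unfold GF
  rw [← Summable.tsum_sub (GF_term_summable x z hs) (GF_term_summable y z hs)]
  exact tsum_congr fun j => by unfold bcoef; ring

lemma DGF_sub (x y z : ℝ) {s : ℝ} (hs : 0 < s) :
    DGF s x z - DGF s y z = -∑' j, acoef x y s j * phiF (j+1) z := by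
  unfold DGF
  rw [show ∀ u v : ℝ, -u - -v = -(u - v) by intro u v; ring]
  rw [← Summable.tsum_sub (DGF_term_summable x z hs) (DGF_term_summable y z hs)]
  exact congrArg Neg.neg (tsum_congr fun j => by unfold acoef; ring)

lemma tsum_phi_cont (c : ℕ → ℝ) (hc : Summable fun j => |c j|) :
    Continuous fun z => ∑' j, c j * phiF (j+1) z := by
  apply continuous_tsum (fun j => continuous_const.mul (phiF_cont (j+1))) hc
  intro j z
  rw [Real.norm_eq_abs, Pi.mul_apply, abs_mul]
  exact mul_le_of_le_one_right (abs_nonneg _) (phiF_abs_le _ _)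

lemma l1_bound (c : ℕ → ℝ) (hc : Summable fun j => |c j|) (B : ℝ) (hB : 0 < B)
    (hle : ∑' j, (c j)^2 ≤ B) :
    ∫ z in (0:ℝ)..Real.pi, |∑' j, c j * phiF (j+1) z| ≤ Real.sqrt (Real.pi * B) := by
  set f : ℝ → ℝ := fun z => ∑' j, c j * phiF (j+1) z with hf
  have hfc : Continuous f := tsum_phi_cont c hc
  set ε : ℝ := Real.sqrt (B / Real.pi) with hεdef
  have hε0 : 0 < ε := Real.sqrt_pos.mpr (div_pos hB Real.pi_pos)
  have hε2 : ε^2 = B / Real.pi := Real.sq_sqrt (div_pos hB Real.pi_pos).le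
  have hBε : B = Real.pi * ε^2 := by
    rw [hε2]
    field_simp
  have hpoint : ∀ z, |f z| ≤ ε/2 + f z^2 * (1/(2*ε)) := by
    intro z
    have h1 : (0:ℝ) < 2*ε := by linarith
    have h3 := sq_nonneg (|f z| - ε)
    rw [sub_sq, sq_abs] at h3
    have h4 : |f z| ≤ (f z^2 + ε^2)/(2*ε) := by
      rw [le_div_iff₀ h1]
      nlinarith [h3]
    refine h4.trans (le_of_eq ?_)
    field_simp
    ring
  have h1 : ∫ z in (0:ℝ)..Real.pi, |f z|
      ≤ ∫ z in (0:ℝ)..Real.pi, (ε/2 + f z^2 * (1/(2*ε))) := by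
    apply intervalIntegral.integral_mono_on Real.pi_pos.le
      (hfc.abs.intervalIntegrable _ _)
      ((continuous_const.add ((hfc.pow 2).mul continuous_const)).intervalIntegrable _ _)
    exact fun z _ => hpoint z
  have h2 : ∫ z in (0:ℝ)..Real.pi, (ε/2 + f z^2 * (1/(2*ε)))
      = Real.pi * (ε/2) + (∑' j, (c j)^2) * (1/(2*ε)) := by
    rw [intervalIntegral.integral_add (g := fun z => f z ^ 2 * (1/(2*ε))) (intervalIntegrable_const)
      (((hfc.pow 2).mul continuous_const).intervalIntegrable _ _),
      intervalIntegral.integral_const, intervalIntegral.integral_mul_const,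
      parseval c hc]
    simp [smul_eq_mul]
  have h3 : Real.pi * (ε/2) + (∑' j, (c j)^2) * (1/(2*ε)) ≤ Real.sqrt (Real.pi * B) := by
    have hsqrt : Real.sqrt (Real.pi * B) = Real.pi * ε := by
      have : Real.pi * B = (Real.pi * ε)^2 := by rw [hBε]; ring
      rw [this, Real.sqrt_sq (by positivity)]
    rw [hsqrt]
    have h4 : (∑' j, (c j)^2) * (1/(2*ε)) ≤ B * (1/(2*ε)) :=
      mul_le_mul_of_nonneg_right hle (by positivity)
    have h5 : Real.pi * (ε/2) + B * (1/(2*ε)) = Real.pi * ε := by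
      rw [hBε]
      field_simp
      ring
    linarith
  calc ∫ z in (0:ℝ)..Real.pi, |f z| ≤ _ := h1
    _ = _ := h2
    _ ≤ _ := h3

lemma inner1 (x y : ℝ) {s : ℝ} (hs : 0 < s) :
    ∫ z in (0:ℝ)..Real.pi, (GF s x z - GF s y z)^2
      ≤ (x-y)^2 * s ^ (-(7:ℝ)/8) * Kc := by
  rw [intervalIntegral.integral_congr
    (g := fun z => (∑' j, bcoef x y s j * phiF (j+1) z)^2)
    (fun z _ => by rw [GF_sub x y z hs])]
  rw [parseval _ (bcoef_abs_summable x y hs)]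
  exact bcoef_tsum_bound x y hs

lemma inner2 (x y : ℝ) {s : ℝ} (hs : 0 < s) (hxy : x ≠ y) :
    ∫ z in (0:ℝ)..Real.pi, |DGF s x z - DGF s y z|
      ≤ Real.sqrt (Real.pi * Kc) * |x-y| * s ^ (-(15:ℝ)/16) := by
  have hB : 0 < (x-y)^2 * s ^ (-(15:ℝ)/8) * Kc := by
    have h1 : (0:ℝ) < (x-y)^2 := by
      have : x - y ≠ 0 := sub_ne_zero.mpr hxy
      positivity
    have h2 : (0:ℝ) < s ^ (-(15:ℝ)/8) := Real.rpow_pos_of_pos hs _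
    exact mul_pos (mul_pos h1 h2) K_pos
  have step1 : ∫ z in (0:ℝ)..Real.pi, |DGF s x z - DGF s y z|
      ≤ Real.sqrt (Real.pi * ((x-y)^2 * s ^ (-(15:ℝ)/8) * Kc)) := by
    rw [intervalIntegral.integral_congr
      (g := fun z => |∑' j, acoef x y s j * phiF (j+1) z|)
      (fun z _ => by rw [DGF_sub x y z hs, abs_neg])]
    exact l1_bound _ (acoef_abs_summable x y hs) _ hB (acoef_tsum_bound x y hs)
  refine step1.trans (le_of_eq ?_)
  rw [show Real.pi * ((x-y)^2 * s ^ (-(15:ℝ)/8) * Kc)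
      = (Real.pi * Kc) * ((x-y)^2 * s ^ (-(15:ℝ)/8)) by ring]
  rw [Real.sqrt_mul (mul_nonneg Real.pi_pos.le K_nonneg),
    Real.sqrt_mul (sq_nonneg _), Real.sqrt_sq_eq_abs]
  have hss : Real.sqrt (s ^ (-(15:ℝ)/8)) = s ^ (-(15:ℝ)/16) := by
    rw [Real.sqrt_eq_rpow, ← Real.rpow_mul hs.le]
    norm_num
  rw [hss]
  ring

lemma outer (F : ℝ → ℝ) (t p M : ℝ) (ht : 0 < t) (hp1 : -1 < p) (hp0 : p < 0) (hM : 0 ≤ M)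
    (hF0 : ∀ r, 0 ≤ F r) (hFle : ∀ r ∈ Set.Ioo 0 t, F r ≤ M * (t - r) ^ p) :
    ∫ r in (0:ℝ)..t, F r ≤ M * (t ^ (p+1) / (p+1)) := by
  have hint : IntervalIntegrable (fun r => M * (t - r)^p) volume 0 t := by
    have h1 : IntervalIntegrable (fun u : ℝ => u ^ p) volume t 0 :=
      intervalIntegrable_rpow' hp1
    have h2 := h1.comp_sub_left t
    simpa using h2.const_mul M
  have step1 : ∫ r in (0:ℝ)..t, F r ≤ ∫ r in (0:ℝ)..t, M * (t - r)^p := by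
    rw [intervalIntegral.integral_of_le ht.le, intervalIntegral.integral_of_le ht.le]
    have hres : volume.restrict (Set.Ioc (0:ℝ) t) = volume.restrict (Set.Ioo (0:ℝ) t) :=
      Measure.restrict_congr_set (Ioo_ae_eq_Ioc).symm
    apply integral_mono_of_nonneg (Filter.Eventually.of_forall hF0)
    · exact (intervalIntegrable_iff_integrableOn_Ioc_of_le ht.le).mp hint
    · rw [hres]
      exact (ae_restrict_iff' measurableSet_Ioo).mpr (Filter.Eventually.of_forall hFle)
  refine step1.trans ?_
  rw [intervalIntegral.integral_const_mul]
  apply mul_le_mul_of_nonneg_left _ hM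
  rw [intervalIntegral.integral_comp_sub_left (fun u : ℝ => u ^ p) t, sub_self, sub_zero]
  rw [integral_rpow (Or.inl hp1)]
  rw [Real.zero_rpow (by linarith : p + 1 ≠ 0)]
  norm_num


/-- For every `T > 0` there is `C = C(T) > 0` such that for all `x, y ∈ (0,π)` and
`t ∈ (0,T]`: `∫₀ᵗ∫₀^π |G_{t-r}(x,z) - G_{t-r}(y,z)|² dz dr ≤ C|x-y|²` and
`∫₀ᵗ∫₀^π |ΔG_{t-r}(x,z) - ΔG_{t-r}(y,z)| dz dr ≤ C|x-y|`. -/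
theorem stmt12 (T : ℝ) (hT : 0 < T) :
    ∃ C : ℝ, 0 < C ∧ ∀ x ∈ Set.Ioo 0 Real.pi, ∀ y ∈ Set.Ioo 0 Real.pi,
      ∀ t ∈ Set.Ioc 0 T,
        (∫ r in (0:ℝ)..t, ∫ z in (0:ℝ)..Real.pi, (GF (t - r) x z - GF (t - r) y z) ^ 2)
            ≤ C * (x - y) ^ 2
        ∧ (∫ r in (0:ℝ)..t, ∫ z in (0:ℝ)..Real.pi, |DGF (t - r) x z - DGF (t - r) y z|)
            ≤ C * |x - y| := by
  classical
  refine ⟨(8*Kc + 16*Real.sqrt (Real.pi*Kc) + 1) * max 1 T, ?_, ?_⟩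
  · have h1 : (0:ℝ) < 8*Kc + 16*Real.sqrt (Real.pi*Kc) + 1 := by
      nlinarith [K_nonneg, Real.sqrt_nonneg (Real.pi*Kc)]
    have h2 : (0:ℝ) < max 1 T := lt_of_lt_of_le one_pos (le_max_left 1 T)
    exact mul_pos h1 h2
  intro x _hx y _hy t ht
  obtain ⟨ht0, htT⟩ := ht
  set Tm := max 1 T with hTmdef
  have hTm1 : (1:ℝ) ≤ Tm := le_max_left 1 T
  have htTm : t ≤ Tm := htT.trans (le_max_right 1 T)
  have hTm0 : (0:ℝ) < Tm := lt_of_lt_of_le one_pos hTm1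
  have ht18 : t ^ ((1:ℝ)/8) ≤ Tm := by
    calc t ^ ((1:ℝ)/8) ≤ Tm ^ ((1:ℝ)/8) :=
          Real.rpow_le_rpow ht0.le htTm (by norm_num)
      _ ≤ Tm ^ (1:ℝ) := Real.rpow_le_rpow_of_exponent_le hTm1 (by norm_num)
      _ = Tm := Real.rpow_one Tm
  have ht116 : t ^ ((1:ℝ)/16) ≤ Tm := by
    calc t ^ ((1:ℝ)/16) ≤ Tm ^ ((1:ℝ)/16) :=
          Real.rpow_le_rpow ht0.le htTm (by norm_num)
      _ ≤ Tm ^ (1:ℝ) := Real.rpow_le_rpow_of_exponent_le hTm1 (by norm_num)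
      _ = Tm := Real.rpow_one Tm
  by_cases hxy : x = y
  · subst hxy
    constructor
    · have hz : ∀ r : ℝ, (∫ z in (0:ℝ)..Real.pi, (GF (t - r) x z - GF (t - r) x z) ^ 2) = 0 := by
        intro r; simp
      simp only [hz, intervalIntegral.integral_zero, sub_self]
      norm_num
    · have hz : ∀ r : ℝ, (∫ z in (0:ℝ)..Real.pi, |DGF (t - r) x z - DGF (t - r) x z|) = 0 := by
        intro r; simp
      simp only [hz, intervalIntegral.integral_zero, sub_self]
      norm_num
  constructor
  · -- part 1
    have houter := outer (fun r => ∫ z in (0:ℝ)..Real.pi, (GF (t-r) x z - GF (t-r) y z)^2)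
      t (-(7:ℝ)/8) ((x-y)^2 * Kc) ht0 (by norm_num) (by norm_num)
      (mul_nonneg (sq_nonneg _) K_nonneg)
      (fun r => intervalIntegral.integral_nonneg Real.pi_pos.le (fun z _ => sq_nonneg _))
      (fun r hr => by
        have hs : 0 < t - r := sub_pos.mpr hr.2
        refine (inner1 x y hs).trans (le_of_eq ?_)
        ring)
    refine houter.trans ?_
    have he : ((-(7:ℝ)/8)+1) = (1:ℝ)/8 := by norm_num
    rw [he]
    have h1 : t ^ ((1:ℝ)/8) / ((1:ℝ)/8) = 8 * t ^ ((1:ℝ)/8) := by ring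
    rw [h1]
    have h2 : (8:ℝ) * t ^ ((1:ℝ)/8) ≤ 8 * Tm := by linarith
    calc (x-y)^2 * Kc * (8 * t ^ ((1:ℝ)/8)) ≤ (x-y)^2 * Kc * (8*Tm) :=
          mul_le_mul_of_nonneg_left h2 (mul_nonneg (sq_nonneg _) K_nonneg)
      _ ≤ (8*Kc + 16*Real.sqrt (Real.pi*Kc) + 1) * Tm * (x-y)^2 := by
          nlinarith [mul_nonneg (mul_nonneg hTm0.le (sq_nonneg (x-y))) (Real.sqrt_nonneg (Real.pi*Kc)),
            mul_nonneg hTm0.le (sq_nonneg (x-y))]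
  · -- part 2
    have houter := outer (fun r => ∫ z in (0:ℝ)..Real.pi, |DGF (t-r) x z - DGF (t-r) y z|)
      t (-(15:ℝ)/16) (Real.sqrt (Real.pi*Kc) * |x-y|) ht0 (by norm_num) (by norm_num)
      (mul_nonneg (Real.sqrt_nonneg _) (abs_nonneg _))
      (fun r => intervalIntegral.integral_nonneg Real.pi_pos.le (fun z _ => abs_nonneg _))
      (fun r hr => by
        have hs : 0 < t - r := sub_pos.mpr hr.2
        exact inner2 x y hs hxy)
    refine houter.trans ?_
    have he : ((-(15:ℝ)/16)+1) = (1:ℝ)/16 := by norm_num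
    rw [he]
    have h1 : t ^ ((1:ℝ)/16) / ((1:ℝ)/16) = 16 * t ^ ((1:ℝ)/16) := by ring
    rw [h1]
    have h2 : (16:ℝ) * t ^ ((1:ℝ)/16) ≤ 16 * Tm := by linarith
    calc Real.sqrt (Real.pi*Kc) * |x-y| * (16 * t ^ ((1:ℝ)/16))
        ≤ Real.sqrt (Real.pi*Kc) * |x-y| * (16*Tm) :=
          mul_le_mul_of_nonneg_left h2 (mul_nonneg (Real.sqrt_nonneg _) (abs_nonneg _))
      _ ≤ (8*Kc + 16*Real.sqrt (Real.pi*Kc) + 1) * Tm * |x-y| := by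
          nlinarith [mul_nonneg (mul_nonneg K_nonneg hTm0.le) (abs_nonneg (x-y)),
            mul_nonneg hTm0.le (abs_nonneg (x-y))]
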